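/- arXiv:1309.3529 — 5 statements merged into one kernel-verified Lean document; each statement's English description precedes it below -/
import Mathlib

section
/- Let f : ℝⁿ → ℝ be differentiable with gradient g = ∇f, let μ > 0 and τ > 0, fix x ∈ ℝⁿ and an n×n matrix H with operator norm ‖H‖. Define F_q(x;y) = g(x) + H(y − x) − P_{[−μ,μ]}(g(x) + H(y − x) − y/τ) and F(x) = F_q(x;x) = g(x) − P_{[−μ,μ]}(g(x) − x/τ). Then for every x̂ ∈ ℝⁿ, ‖F_q(x;x̂) − F(x)‖ ≤ (1/τ + 2‖H‖)‖x̂ − x‖. -/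
/-! Writing `d = x̂ - x`, the difference `F_q(x;x̂) - F(x)` is `H d` minus the difference of two
projections whose arguments differ by `H d - d / τ`. The projection is nonexpansive, so the
triangle inequality bounds the norm by `‖H d‖ + ‖H d - d / τ‖ ≤ (1/τ + 2‖H‖)‖d‖`. -/

open scoped RealInnerProductSpace

theorem EuclideanSpace.lipschitzWith_toLp_comp {ι : Type*} [Fintype ι] {φ : ℝ → ℝ}
    (hφ : LipschitzWith 1 φ) :
    LipschitzWith 1 fun v : EuclideanSpace ℝ ι => WithLp.toLp 2 fun i => φ (v i) := by
  refine LipschitzWith.of_dist_le_mul fun v w => ?_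
  rw [NNReal.coe_one, one_mul, EuclideanSpace.dist_eq, EuclideanSpace.dist_eq]
  gcongr with i
  simpa using hφ.dist_le_mul (v i) (w i)

section ModelResidual

variable {E : Type*} [SeminormedAddCommGroup E] [NormedSpace ℝ E]

/-- With `P` the projection onto `[-μ, μ]ⁿ`, `b = g x`, `A = H` and `c = τ⁻¹`, this is
`F_q(x; y)`. -/
def modelResidual (P : E → E) (A : E →L[ℝ] E) (b x : E) (c : ℝ) (y : E) : E :=
  b + A (y - x) - P (b + A (y - x) - c • y)

theorem norm_modelResidual_sub_le {P : E → E} (hP : LipschitzWith 1 P) (A : E →L[ℝ] E)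
    (b x : E) (c : ℝ) (y : E) :
    ‖modelResidual P A b x c y - modelResidual P A b x c x‖ ≤ (|c| + 2 * ‖A‖) * ‖y - x‖ := by
  set d := y - x
  have hP_sub : ‖P (b + A d - c • y) - P (b - c • x)‖ ≤ ‖A d - c • d‖ := by
    convert hP.norm_sub_le (b + A d - c • y) (b - c • x) using 2
    rw [NNReal.coe_one, one_mul, smul_sub]; congr 1; abel
  calc ‖modelResidual P A b x c y - modelResidual P A b x c x‖
      = ‖A d - (P (b + A d - c • y) - P (b - c • x))‖ := by
        simp only [modelResidual, sub_self, map_zero, add_zero, d]; congr 1; abel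
    _ ≤ ‖A d‖ + (‖A d‖ + ‖c • d‖) := norm_sub_le_of_le le_rfl (hP_sub.trans (norm_sub_le _ _))
    _ ≤ ‖A‖ * ‖d‖ + (‖A‖ * ‖d‖ + |c| * ‖d‖) := by
        rw [norm_smul, Real.norm_eq_abs]; gcongr <;> exact A.le_opNorm d
    _ = (|c| + 2 * ‖A‖) * ‖d‖ := by ring

end ModelResidual

variable {n : ℕ}
local notation "E" => EuclideanSpace ℝ (Fin n)
local notation "CLM" => Matrix.toEuclideanCLM (𝕜 := ℝ)

theorem stmt_3_general
    (g : E → E)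
    (μ τ : ℝ) (hτ : 0 < τ)
    (x : E)
    (H : Matrix (Fin n) (Fin n) ℝ)
    (Fq : E → E)
    (hFq : ∀ y i, Fq y i =
      g x i + CLM H (y - x) i -
        max (-μ) (min μ (g x i + CLM H (y - x) i - y i / τ)))
    (xh : E) :
    ‖Fq xh - Fq x‖ ≤ (1 / τ + 2 * ‖CLM H‖) * ‖xh - x‖ := by
  have hproj := EuclideanSpace.lipschitzWith_toLp_comp (ι := Fin n)
    (((LipschitzWith.id (α := ℝ)).const_min μ).const_max (-μ))
  have hFq_eq : Fq = modelResidual (fun v : E => WithLp.toLp 2 fun i => max (-μ) (min μ (v i)))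
      (CLM H) (g x) x τ⁻¹ := by
    funext y; ext i
    rw [hFq]
    simp only [modelResidual, PiLp.sub_apply, PiLp.add_apply, PiLp.smul_apply, smul_eq_mul,
      div_eq_inv_mul]
  calc ‖Fq xh - Fq x‖ ≤ (|τ⁻¹| + 2 * ‖CLM H‖) * ‖xh - x‖ := by
        rw [hFq_eq]; exact norm_modelResidual_sub_le hproj (CLM H) (g x) x τ⁻¹ xh
    _ = (1 / τ + 2 * ‖CLM H‖) * ‖xh - x‖ := by rw [abs_of_pos (inv_pos.mpr hτ), one_div]

/-- `‖F_q(x;x̂) - F(x)‖ ≤ (1/τ + 2‖H‖)‖x̂ - x‖`, where `F(x) = F_q(x;x)`. -/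
theorem stmt_3
    (f : E → ℝ) (g : E → E)
    (hg : ∀ y, HasGradientAt f (g y) y)
    (μ τ : ℝ) (hμ : 0 < μ) (hτ : 0 < τ)
    (x : E)
    (H : Matrix (Fin n) (Fin n) ℝ)
    (Fq : E → E)
    (hFq : ∀ y i, Fq y i =
      g x i + CLM H (y - x) i -
        max (-μ) (min μ (g x i + CLM H (y - x) i - y i / τ)))
    (xh : E) :
    ‖Fq xh - Fq x‖ ≤ (1 / τ + 2 * ‖CLM H‖) * ‖xh - x‖ :=
  stmt_3_general g μ τ hτ x H Fq hFq xh
end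

section
/- Let f : ℝⁿ → ℝ be differentiable with gradient g = ∇f satisfying ‖g(x) − g(y)‖ ≤ M‖x − y‖ for all x, y, let μ > 0 and θ ∈ (0,1). Fix x ∈ ℝⁿ, set φ(y) = f(y) + μ‖y‖₁ and ℓ(y) = f(x) + g(x)ᵀ(y − x) + μ‖y‖₁, and let d ∈ ℝⁿ and λ > 0 satisfy ℓ(x) − ℓ(x + d) ≥ (λ/2)‖d‖². Then for every α with 0 < α ≤ 1 and α ≤ (1 − θ)λ/M, the sufficient decrease condition φ(x) − φ(x + αd) ≥ θ(ℓ(x) − ℓ(x + αd)) holds. -/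
/-! The model `ℓ` is convex, so along the segment its decrease is at least linear in the step:
`ℓ x - ℓ (x + α • d) ≥ α (ℓ x - ℓ (x + d)) ≥ α λ ‖d‖² / 2`. The descent lemma for an
`M`-Lipschitz gradient gives `φ ≤ ℓ + M/2 ‖· - x‖²` with equality at `x`, so the actual decrease
falls short of the model decrease by at most `M α² ‖d‖² / 2 ≤ (1 - θ) α λ ‖d‖² / 2`, which is at
most `(1 - θ)` times the model decrease. -/

open scoped RealInnerProductSpace

variable {n : ℕ}
local notation "E" => EuclideanSpace ℝ (Fin n)
local notation "CLM" => Matrix.toEuclideanCLM (𝕜 := ℝ)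

open Finset Set

section Descent

variable {F : Type*} [NormedAddCommGroup F] [InnerProductSpace ℝ F] [CompleteSpace F]
  {f : F → ℝ} {g : F → F} {M : ℝ}

theorem hasDerivAt_add_smul_of_hasGradientAt (hg : ∀ y, HasGradientAt f (g y) y)
    (x v : F) (t : ℝ) : HasDerivAt (fun s : ℝ => f (x + s • v)) ⟪g (x + t • v), v⟫ t := by
  have hline : HasDerivAt (fun s : ℝ => x + s • v) v t := by
    simpa using ((hasDerivAt_id t).smul_const v).const_add x
  exact (hg _).hasFDerivAt.comp_hasDerivAt t hline

omit [CompleteSpace F] in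
theorem inner_sub_gradient_le_of_lipschitz (hLip : ∀ a b, ‖g a - g b‖ ≤ M * ‖a - b‖)
    (x v : F) {t : ℝ} (ht : 0 ≤ t) : ⟪g (x + t • v) - g x, v⟫ ≤ M * t * ‖v‖ ^ 2 :=
  calc ⟪g (x + t • v) - g x, v⟫ ≤ ‖g (x + t • v) - g x‖ * ‖v‖ := real_inner_le_norm _ _
    _ ≤ M * ‖t • v‖ * ‖v‖ := by gcongr; simpa using hLip (x + t • v) x
    _ = M * t * ‖v‖ ^ 2 := by rw [norm_smul, Real.norm_of_nonneg ht]; ring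

theorem le_add_inner_add_sq_of_lipschitz_gradient (hg : ∀ y, HasGradientAt f (g y) y)
    (hLip : ∀ a b, ‖g a - g b‖ ≤ M * ‖a - b‖) (x y : F) :
    f y ≤ f x + ⟪g x, y - x⟫ + M / 2 * ‖y - x‖ ^ 2 := by
  set v := y - x
  -- `ψ` is antitone on `[0, 1]`, and `ψ 0 ≥ ψ 1` is the claim.
  let ψ : ℝ → ℝ := fun t => f (x + t • v) - t * ⟪g x, v⟫ - M / 2 * t ^ 2 * ‖v‖ ^ 2
  have hψ : ∀ t, HasDerivAt ψ (⟪g (x + t • v) - g x, v⟫ - M * t * ‖v‖ ^ 2) t := by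
    intro t
    have := ((hasDerivAt_add_smul_of_hasGradientAt hg x v t).sub
      ((hasDerivAt_id t).mul_const ⟪g x, v⟫)).sub
      (((hasDerivAt_pow 2 t).const_mul (M / 2)).mul_const (‖v‖ ^ 2))
    exact this.congr_deriv (by rw [inner_sub_left]; ring)
  have hanti : AntitoneOn ψ (Icc 0 1) := by
    refine antitoneOn_of_hasDerivWithinAt_nonpos (convex_Icc 0 1)
      (fun t _ => (hψ t).continuousAt.continuousWithinAt) (fun t _ => (hψ t).hasDerivWithinAt)
      fun t ht => ?_
    rw [interior_Icc] at ht
    linarith [inner_sub_gradient_le_of_lipschitz hLip x v ht.1.le]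
  have hψ01 := hanti (left_mem_Icc.2 zero_le_one) (right_mem_Icc.2 zero_le_one) zero_le_one
  simp only [ψ, zero_smul, one_smul, add_zero, zero_mul, one_mul, mul_one, zero_pow two_ne_zero,
    one_pow, mul_zero, sub_zero, v, add_sub_cancel] at hψ01
  linarith

end Descent

theorem convexOn_sum_abs {ι : Type*} [Fintype ι] :
    ConvexOn ℝ univ fun y : EuclideanSpace ℝ ι => ∑ i, |y i| := by
  refine ⟨convex_univ, fun y _ z _ a b ha hb _ => ?_⟩
  simp only [PiLp.add_apply, PiLp.smul_apply, smul_eq_mul, mul_sum, ← sum_add_distrib]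
  gcongr with i
  calc |a * y i + b * z i| ≤ |a * y i| + |b * z i| := abs_add_le _ _
    _ = a * |y i| + b * |z i| := by rw [abs_mul, abs_mul, abs_of_nonneg ha, abs_of_nonneg hb]

theorem sufficient_decrease_of_convex_model {F : Type*} [NormedAddCommGroup F] [NormedSpace ℝ F]
    {φ ℓ : F → ℝ} {x d : F} {M lam θ α : ℝ} (hℓ : ConvexOn ℝ univ ℓ) (hφx : φ x = ℓ x)
    (hφ : ∀ y, φ y ≤ ℓ y + M / 2 * ‖y - x‖ ^ 2) (hd : ℓ x - ℓ (x + d) ≥ lam / 2 * ‖d‖ ^ 2)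
    (hθ : θ ≤ 1) (hα0 : 0 ≤ α) (hα1 : α ≤ 1) (hαM : α * M ≤ (1 - θ) * lam) :
    φ x - φ (x + α • d) ≥ θ * (ℓ x - ℓ (x + α • d)) := by
  have hseg : ℓ (x + α • d) ≤ (1 - α) * ℓ x + α * ℓ (x + d) := by
    have hx : x + α • d = (1 - α) • x + α • (x + d) := by module
    rw [hx]
    exact hℓ.2 (mem_univ x) (mem_univ (x + d)) (sub_nonneg.2 hα1) hα0 (by ring)
  have hmodel : ℓ x - ℓ (x + α • d) ≥ α * (lam / 2) * ‖d‖ ^ 2 := by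
    nlinarith [mul_le_mul_of_nonneg_left hd hα0]
  have hquad : M / 2 * ‖α • d‖ ^ 2 ≤ (1 - θ) * (ℓ x - ℓ (x + α • d)) := by
    have hsq : ‖α • d‖ ^ 2 = α * (α * ‖d‖ ^ 2) := by
      rw [norm_smul, Real.norm_of_nonneg hα0]; ring
    rw [hsq]
    nlinarith [mul_le_mul_of_nonneg_right hαM (mul_nonneg hα0 (sq_nonneg ‖d‖)),
      mul_le_mul_of_nonneg_left hmodel (sub_nonneg.2 hθ)]
  have hφα := hφ (x + α • d)
  rw [add_sub_cancel_left] at hφα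
  linarith

theorem stmt_5_general
    (f : E → ℝ) (g : E → E)
    (hg : ∀ y, HasGradientAt f (g y) y)
    (M : ℝ) (hLip : ∀ a b : E, ‖g a - g b‖ ≤ M * ‖a - b‖)
    (μ θ : ℝ) (hμ : 0 < μ) (hθ1 : θ < 1)
    (x : E)
    (φ : E → ℝ) (hφ : ∀ y, φ y = f y + μ * ∑ i, |y i|)
    (ℓ : E → ℝ)
    (hℓ : ∀ y, ℓ y = f x + ⟪g x, y - x⟫ + μ * ∑ i, |y i|)
    (d : E) (lam : ℝ) (hlam : 0 < lam)
    (hd : ℓ x - ℓ (x + d) ≥ (lam / 2) * ‖d‖ ^ 2) :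
    ∀ α : ℝ, 0 < α → α ≤ 1 → α ≤ (1 - θ) * lam / M →
      φ x - φ (x + α • d) ≥ θ * (ℓ x - ℓ (x + α • d)) := by
  intro α hα0 hα1 hαM
  have hℓ_convex : ConvexOn ℝ univ ℓ := by
    have hℓ_eq : ℓ = fun y => ⟪g x, y⟫ + μ * ∑ i, |y i| + (f x - ⟪g x, x⟫) :=
      funext fun y => by rw [hℓ, inner_sub_right]; ring
    rw [hℓ_eq]
    exact (((innerₛₗ ℝ (g x)).convexOn convex_univ).add (convexOn_sum_abs.smul hμ.le)).add_const _
  have hφ_le : ∀ y, φ y ≤ ℓ y + M / 2 * ‖y - x‖ ^ 2 := fun y => by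
    rw [hφ, hℓ]
    linarith [le_add_inner_add_sq_of_lipschitz_gradient hg hLip x y]
  have hαM' : α * M ≤ (1 - θ) * lam := by
    rcases le_or_gt M 0 with hM | hM
    · linarith [mul_nonpos_of_nonneg_of_nonpos hα0.le hM, mul_pos (sub_pos.2 hθ1) hlam]
    · exact (le_div_iff₀ hM).1 hαM
  have hφx : φ x = ℓ x := by rw [hφ, hℓ, sub_self, inner_zero_right, add_zero]
  exact sufficient_decrease_of_convex_model hℓ_convex hφx hφ_le hd hθ1.le hα0.le hα1 hαM'

/-- sufficient decrease holds for every step length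
`0 < α ≤ 1` with `α ≤ (1-θ)λ/M`. -/
theorem stmt_5
    (f : E → ℝ) (g : E → E)
    (hg : ∀ y, HasGradientAt f (g y) y)
    (M : ℝ) (hLip : ∀ a b : E, ‖g a - g b‖ ≤ M * ‖a - b‖)
    (μ θ : ℝ) (hμ : 0 < μ) (hθ0 : 0 < θ) (hθ1 : θ < 1)
    (x : E)
    (φ : E → ℝ) (hφ : ∀ y, φ y = f y + μ * ∑ i, |y i|)
    (ℓ : E → ℝ)
    (hℓ : ∀ y, ℓ y = f x + ⟪g x, y - x⟫ + μ * ∑ i, |y i|)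
    (d : E) (lam : ℝ) (hlam : 0 < lam)
    (hd : ℓ x - ℓ (x + d) ≥ (lam / 2) * ‖d‖ ^ 2) :
    ∀ α : ℝ, 0 < α → α ≤ 1 → α ≤ (1 - θ) * lam / M →
      φ x - φ (x + α • d) ≥ θ * (ℓ x - ℓ (x + α • d)) :=
  stmt_5_general f g hg M hLip μ θ hμ hθ1 x φ hφ ℓ hℓ d lam hlam hd
end

section
/- Let H be any n×n real matrix, g ∈ ℝⁿ, x ∈ ℝⁿ, μ > 0 and τ > 0, and define F_q(x;y) = g + H(y − x) − P_{[−μ,μ]}(g + H(y − x) − y/τ). Then for any y, z ∈ ℝⁿ there exists a diagonal matrix D = diag(d̄₁, …, d̄ₙ) with every d̄ᵢ ∈ [0,1] such that F_q(x;z) − F_q(x;y) = H(z − y) + D((1/τ)I − H)(z − y). -/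
open scoped RealInnerProductSpace

variable {n : ℕ}
local notation "E" => EuclideanSpace ℝ (Fin n)
local notation "CLM" => Matrix.toEuclideanCLM (𝕜 := ℝ)

/-! The clamp `t ↦ max (-μ) (min μ t)` is monotone and 1-Lipschitz, so each of its difference
quotients lies in `[0, 1]`. Take `dᵢ` to be the difference quotient between the `i`-th clamp
arguments at `z` and at `y`; these arguments differ by `(H (z - y))ᵢ - (z - y)ᵢ / τ`, which gives
the identity coordinatewise. -/

theorem Monotone.exists_mem_Icc_sub_eq_mul_sub {f : ℝ → ℝ} (hmono : Monotone f)
    (hlip : LipschitzWith 1 f) (a b : ℝ) :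
    ∃ d ∈ Set.Icc (0 : ℝ) 1, f a - f b = d * (a - b) := by
  wlog hba : b < a generalizing a b
  · rcases (not_lt.mp hba).eq_or_lt with rfl | hab
    · exact ⟨0, by simp, by simp⟩
    · obtain ⟨d, hd, h⟩ := this b a hab
      exact ⟨d, hd, by linear_combination -h⟩
  have hpos : 0 < a - b := sub_pos.2 hba
  have hmon : 0 ≤ f a - f b := sub_nonneg.2 (hmono hba.le)
  have hle : f a - f b ≤ a - b := by
    simpa [Real.dist_eq, abs_of_nonneg hmon, abs_of_pos hpos] using hlip.dist_le_mul a b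
  exact ⟨(f a - f b) / (a - b), ⟨div_nonneg hmon hpos.le, (div_le_one hpos).2 hle⟩,
    (div_mul_cancel₀ _ hpos.ne').symm⟩

theorem monotone_clamp (μ : ℝ) : Monotone fun t : ℝ => max (-μ) (min μ t) :=
  fun _ _ h => max_le_max le_rfl (min_le_min le_rfl h)

theorem lipschitzWith_one_clamp (μ : ℝ) : LipschitzWith 1 fun t : ℝ => max (-μ) (min μ t) :=
  (LipschitzWith.id.const_min μ).const_max (-μ)

theorem toEuclideanCLM_diagonal_mul_apply (d : Fin n → ℝ) (τ : ℝ)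
    (H : Matrix (Fin n) (Fin n) ℝ) (v : E) (i : Fin n) :
    CLM (Matrix.diagonal d * ((1 / τ) • (1 : Matrix (Fin n) (Fin n) ℝ) - H)) v i =
      d i * (v i / τ - CLM H v i) := by
  simp [Matrix.mulVec_diagonal]
  ring

theorem stmt_9_general
    (H : Matrix (Fin n) (Fin n) ℝ)
    (gx x : E) (μ τ : ℝ)
    (Fq : E → E)
    (hFq : ∀ y i, Fq y i =
      gx i + CLM H (y - x) i -
        max (-μ) (min μ (gx i + CLM H (y - x) i - y i / τ)))
    (y z : E) :
    ∃ d : Fin n → ℝ, (∀ i, d i ∈ Set.Icc (0 : ℝ) 1) ∧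
      Fq z - Fq y =
        CLM H (z - y) +
          CLM (Matrix.diagonal d *
            ((1 / τ) • (1 : Matrix (Fin n) (Fin n) ℝ) - H)) (z - y) := by
  choose d hd hclamp using fun i => (monotone_clamp μ).exists_mem_Icc_sub_eq_mul_sub
    (lipschitzWith_one_clamp μ) (gx i + CLM H (z - x) i - z i / τ)
    (gx i + CLM H (y - x) i - y i / τ)
  refine ⟨d, hd, ?_⟩
  ext i
  have hHzy : CLM H (z - y) i = CLM H (z - x) i - CLM H (y - x) i := by
    rw [← sub_sub_sub_cancel_right z y x, map_sub, PiLp.sub_apply]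
  rw [PiLp.sub_apply, PiLp.add_apply, hFq, hFq, toEuclideanCLM_diagonal_mul_apply, hHzy,
    PiLp.sub_apply]
  linear_combination -(hclamp i)

/-- mean-value decomposition
`F_q(x;z) - F_q(x;y) = H(z-y) + D((1/τ)I - H)(z-y)` with `D` diagonal,
entries in `[0,1]`. -/
theorem stmt_9
    (H : Matrix (Fin n) (Fin n) ℝ)
    (gx x : E) (μ τ : ℝ) (hμ : 0 < μ) (hτ : 0 < τ)
    (Fq : E → E)
    (hFq : ∀ y i, Fq y i =
      gx i + CLM H (y - x) i -
        max (-μ) (min μ (gx i + CLM H (y - x) i - y i / τ)))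
    (y z : E) :
    ∃ d : Fin n → ℝ, (∀ i, d i ∈ Set.Icc (0 : ℝ) 1) ∧
      Fq z - Fq y =
        CLM H (z - y) +
          CLM (Matrix.diagonal d *
            ((1 / τ) • (1 : Matrix (Fin n) (Fin n) ℝ) - H)) (z - y) :=
  stmt_9_general H gx x μ τ Fq hFq y z
end

section
/- Let f : ℝⁿ → ℝ be twice differentiable with gradient g = ∇f and Hessian ∇²f Lipschitz continuous in operator norm with constant L, let μ > 0 and τ > 0. Define F(y) = g(y) − P_{[−μ,μ]}(g(y) − y/τ) and F_q(x;y) = g(x) + ∇²f(x)(y − x) − P_{[−μ,μ]}(g(x) + ∇²f(x)(y − x) − y/τ). Then for all x, y ∈ ℝⁿ, ‖F(y) − F_q(x;y)‖ ≤ 2‖g(y) − g(x) − ∇²f(x)(y − x)‖ ≤ L‖x − y‖². -/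
/-! Componentwise, `F(y) - F_q(x;y)` is `eᵢ - (P(a) - P(b))` with `a - b = eᵢ`, where
`e = g(y) - g(x) - ∇²f(x)(y - x)` is the Taylor remainder; since the projection `P` onto
`[-μ, μ]` is `1`-Lipschitz, each entry is at most `2|eᵢ|`. The remainder itself is bounded by
`L‖y - x‖² / 2` by comparing `t ↦ g(x + t(y - x)) - g(x) - t ∇²f(x)(y - x)` with
`t ↦ L‖y - x‖² t² / 2` on `[0, 1]`. -/

open scoped RealInnerProductSpace

variable {n : ℕ}
local notation "E" => EuclideanSpace ℝ (Fin n)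
local notation "CLM" => Matrix.toEuclideanCLM (𝕜 := ℝ)

def clip (μ r : ℝ) : ℝ := max (-μ) (min μ r)

lemma abs_clip_sub_clip_le (μ r s : ℝ) : |clip μ r - clip μ s| ≤ |r - s| := by
  refine (abs_max_sub_max_le_max _ _ _ _).trans ?_
  simpa using abs_min_sub_min_le_max μ r μ s

lemma abs_sub_clip_sub_le (μ p q t : ℝ) :
    |(p - clip μ (p - t)) - (q - clip μ (q - t))| ≤ 2 * |p - q| :=
  calc |(p - clip μ (p - t)) - (q - clip μ (q - t))|
      = |(p - q) - (clip μ (p - t) - clip μ (q - t))| := by ring_nf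
    _ ≤ |p - q| + |clip μ (p - t) - clip μ (q - t)| := abs_sub _ _
    _ ≤ |p - q| + |(p - t) - (q - t)| := add_le_add le_rfl (abs_clip_sub_clip_le μ _ _)
    _ = 2 * |p - q| := by ring_nf

lemma EuclideanSpace.norm_le_mul_norm_of_forall_abs_le {ι : Type*} [Fintype ι]
    {u w : EuclideanSpace ℝ ι} {c : ℝ} (hc : 0 ≤ c) (h : ∀ i, |u i| ≤ c * |w i|) :
    ‖u‖ ≤ c * ‖w‖ := by
  rw [EuclideanSpace.norm_eq, EuclideanSpace.norm_eq, ← Real.sqrt_sq hc,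
    ← Real.sqrt_mul (sq_nonneg c), Finset.mul_sum]
  refine Real.sqrt_le_sqrt (Finset.sum_le_sum fun i _ => ?_)
  simp only [Real.norm_eq_abs, ← mul_pow]
  exact pow_le_pow_left₀ (abs_nonneg _) (h i) 2

lemma norm_sub_sub_apply_le_of_lipschitz_fderiv
    {V W : Type*} [NormedAddCommGroup V] [NormedSpace ℝ V]
    [NormedAddCommGroup W] [NormedSpace ℝ W]
    {g : V → W} {g' : V → V →L[ℝ] W} (hg : ∀ z, HasFDerivAt g (g' z) z)
    {L : ℝ} (hL : ∀ a b, ‖g' a - g' b‖ ≤ L * ‖a - b‖) (x y : V) :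
    ‖g y - g x - g' x (y - x)‖ ≤ L / 2 * ‖y - x‖ ^ 2 := by
  set v := y - x
  set φ : ℝ → W := fun t => g (x + t • v) - g x - t • g' x v
  have hφ : ∀ t, HasDerivAt φ ((g' (x + t • v) - g' x) v) t := by
    intro t
    have hline : HasDerivAt (fun t : ℝ => x + t • v) v t := by
      simpa using ((hasDerivAt_id t).smul_const v).const_add x
    have hlin : HasDerivAt (fun t : ℝ => t • g' x v) (g' x v) t := by
      simpa using (hasDerivAt_id t).smul_const (g' x v)
    exact (((hg _).comp_hasDerivAt t hline).sub_const (g x)).sub hlin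
  have hB : ∀ t, HasDerivAt (fun t => L / 2 * ‖v‖ ^ 2 * t ^ 2) (L * ‖v‖ ^ 2 * t) t := by
    intro t
    exact ((hasDerivAt_pow 2 t).const_mul (L / 2 * ‖v‖ ^ 2)).congr_deriv (by push_cast; ring)
  have hbound : ∀ t ∈ Set.Ico (0 : ℝ) 1, ‖(g' (x + t • v) - g' x) v‖ ≤ L * ‖v‖ ^ 2 * t := by
    intro t ht
    calc ‖(g' (x + t • v) - g' x) v‖ ≤ ‖g' (x + t • v) - g' x‖ * ‖v‖ :=
          (g' (x + t • v) - g' x).le_opNorm v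
      _ ≤ L * ‖x + t • v - x‖ * ‖v‖ := by gcongr; exact hL _ _
      _ = L * ‖v‖ ^ 2 * t := by
          rw [add_sub_cancel_left, norm_smul, Real.norm_of_nonneg ht.1]; ring
  have key := image_norm_le_of_norm_deriv_right_le_deriv_boundary
    (fun t _ => (hφ t).continuousAt.continuousWithinAt) (fun t _ => (hφ t).hasDerivWithinAt)
    (by simp [φ]) hB hbound (Set.right_mem_Icc.2 zero_le_one)
  simpa [φ, v] using key

theorem stmt_12_general
    (g : E → E)
    (Hess : E → Matrix (Fin n) (Fin n) ℝ)
    (hHess : ∀ y, HasFDerivAt g (CLM (Hess y)) y)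
    (L : ℝ) (hL : ∀ a b : E, ‖CLM (Hess a) - CLM (Hess b)‖ ≤ L * ‖a - b‖)
    (μ τ : ℝ)
    (F : E → E)
    (hF : ∀ y i, F y i = g y i - max (-μ) (min μ (g y i - y i / τ)))
    (Fq : E → E → E)
    (hFq : ∀ x y i, Fq x y i =
      g x i + CLM (Hess x) (y - x) i -
        max (-μ) (min μ (g x i + CLM (Hess x) (y - x) i - y i / τ)))
    (x y : E) :
    ‖F y - Fq x y‖ ≤ 2 * ‖g y - g x - CLM (Hess x) (y - x)‖ ∧
    2 * ‖g y - g x - CLM (Hess x) (y - x)‖ ≤ L * ‖x - y‖ ^ 2 := by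
  constructor
  · refine EuclideanSpace.norm_le_mul_norm_of_forall_abs_le zero_le_two fun i => ?_
    have hentry := abs_sub_clip_sub_le μ (g y i) (g x i + CLM (Hess x) (y - x) i) (y i / τ)
    simp only [clip] at hentry
    simpa [hF, hFq, sub_sub] using hentry
  · have htaylor := norm_sub_sub_apply_le_of_lipschitz_fderiv hHess hL x y
    rw [norm_sub_rev y x] at htaylor
    linarith

/-- `‖F(y) - F_q(x;y)‖ ≤ 2‖g(y) - g(x) - ∇²f(x)(y-x)‖ ≤ L‖x-y‖²`
when the Hessian is `L`-Lipschitz in operator norm. -/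
theorem stmt_12
    (f : E → ℝ) (g : E → E) (hg : ∀ y, HasGradientAt f (g y) y)
    (Hess : E → Matrix (Fin n) (Fin n) ℝ)
    (hHess : ∀ y, HasFDerivAt g (CLM (Hess y)) y)
    (L : ℝ) (hL : ∀ a b : E, ‖CLM (Hess a) - CLM (Hess b)‖ ≤ L * ‖a - b‖)
    (μ τ : ℝ) (hμ : 0 < μ) (hτ : 0 < τ)
    (F : E → E)
    (hF : ∀ y i, F y i = g y i - max (-μ) (min μ (g y i - y i / τ)))
    (Fq : E → E → E)
    (hFq : ∀ x y i, Fq x y i =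
      g x i + CLM (Hess x) (y - x) i -
        max (-μ) (min μ (g x i + CLM (Hess x) (y - x) i - y i / τ)))
    (x y : E) :
    ‖F y - Fq x y‖ ≤ 2 * ‖g y - g x - CLM (Hess x) (y - x)‖ ∧
    2 * ‖g y - g x - CLM (Hess x) (y - x)‖ ≤ L * ‖x - y‖ ^ 2 :=
  stmt_12_general g Hess hHess L hL μ τ F hF Fq hFq x y
end

section
/- (Acceptance of the unit step length.) Let f : ℝⁿ → ℝ be twice differentiable with gradient g = ∇f, let μ > 0, θ ∈ (0, 1/2), and ζ ∈ (θ, 1/2). Fix x ∈ ℝⁿ, set H = ∇²f(x), and assume wᵀHw ≥ λ‖w‖² for all w, with λ > 0. Define φ, ℓ and q as usual, and suppose there is ρ > 0 such that |f(x + d) − f(x) − g(x)ᵀd − ½dᵀHd| ≤ ρ‖d‖³ (which holds with ρ = L/6 when ∇²f is L-Lipschitz). If d ∈ ℝⁿ satisfies q(x + d) < q(x), q(x + d) − q(x) ≤ ζ(ℓ(x + d) − ℓ(x)), and ‖d‖ ≤ (ζ − θ)λ/(2ρ), then the sufficient decrease condition holds with step length one: φ(x + d) − φ(x) ≤ θ(ℓ(x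 + d) − ℓ(x)). -/
open scoped RealInnerProductSpace

variable {n : ℕ}
local notation "E" => EuclideanSpace ℝ (Fin n)
local notation "CLM" => Matrix.toEuclideanCLM (𝕜 := ℝ)

/-- acceptance of the unit step length: if `d` satisfies the
strengthened inexactness conditions and `‖d‖ ≤ (ζ-θ)λ/(2ρ)`, then the
sufficient decrease condition holds with step length one. -/
theorem stmt_18
    (f : E → ℝ) (g : E → E)
    (hg : ∀ y, HasGradientAt f (g y) y)
    (μ θ ζ : ℝ) (hμ : 0 < μ)
    (hθ0 : 0 < θ) (hθ1 : θ < 1 / 2) (hθζ : θ < ζ) (hζ1 : ζ < 1 / 2)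
    (x : E)
    (H : Matrix (Fin n) (Fin n) ℝ)
    (hH : HasFDerivAt g (CLM H) x)
    (lam : ℝ) (hlam : 0 < lam)
    (hlb : ∀ w : E, lam * ‖w‖ ^ 2 ≤ ⟪w, CLM H w⟫)
    (φ ℓ q : E → ℝ)
    (hφ : ∀ y, φ y = f y + μ * ∑ i, |y i|)
    (hℓ : ∀ y, ℓ y = f x + ⟪g x, y - x⟫ + μ * ∑ i, |y i|)
    (hq : ∀ y, q y = ℓ y + (1 / 2) * ⟪y - x, CLM H (y - x)⟫)
    (ρ : ℝ) (hρ : 0 < ρ)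
    (hTaylor : ∀ w : E,
      |f (x + w) - f x - ⟪g x, w⟫ - (1 / 2) * ⟪w, CLM H w⟫| ≤ ρ * ‖w‖ ^ 3)
    (d : E)
    (h1 : q (x + d) < q x)
    (h2 : q (x + d) - q x ≤ ζ * (ℓ (x + d) - ℓ x))
    (h3 : ‖d‖ ≤ (ζ - θ) * lam / (2 * ρ)) :
    φ (x + d) - φ x ≤ θ * (ℓ (x + d) - ℓ x) := by
  have hT := hTaylor d
  have hB := hlb d
  have hd0 : (0:ℝ) ≤ ‖d‖ := norm_nonneg d
  have hqΔ : q (x + d) - q x = (ℓ (x + d) - ℓ x) + (1 / 2) * ⟪d, CLM H d⟫ := by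
    rw [hq, hq]
    simp [add_sub_cancel_left]
    ring
  have hφΔ : φ (x + d) - φ x =
      (f (x + d) - f x - ⟪g x, d⟫ - (1 / 2) * ⟪d, CLM H d⟫) + (q (x + d) - q x) := by
    rw [hφ, hφ, hq, hq, hℓ, hℓ]
    simp [add_sub_cancel_left]
    ring
  have hTub : f (x + d) - f x - ⟪g x, d⟫ - (1 / 2) * ⟪d, CLM H d⟫ ≤ ρ * ‖d‖ ^ 3 :=
    (abs_le.mp hT).2
  have hL : ℓ (x + d) - ℓ x + (1 / 2) * ⟪d, CLM H d⟫ < 0 := by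
    rw [← hqΔ]; linarith
  have h3' : 2 * ρ * ‖d‖ ≤ (ζ - θ) * lam := by
    have := (le_div_iff₀ (show (0:ℝ) < 2 * ρ by positivity)).mp h3
    nlinarith [this]
  have hLneg : ℓ (x + d) - ℓ x ≤ -(lam / 2) * ‖d‖ ^ 2 := by nlinarith
  have hkey : ρ * ‖d‖ ^ 3 ≤ (θ - ζ) * (ℓ (x + d) - ℓ x) := by
    nlinarith [mul_le_mul_of_nonneg_right h3' (sq_nonneg ‖d‖),
      mul_le_mul_of_nonneg_left hLneg (by linarith : (0:ℝ) ≤ ζ - θ)]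
  linarith [hφΔ, hTub, h2, hkey]
end
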